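/- Let C_strip be the strip framework in ℝ². If u : {1,2,3} × ℤ → ℝ² is an infinitesimal flex of C_strip with u(1,k) = 0 for all k ∈ ℤ (the supporting vertices are fixed) and ∑_{k ∈ ℤ} ( ‖u(2,k)‖² + ‖u(3,k)‖² ) < ∞, then u is identically zero. That is, the strip framework rooted at its supporting line has no nonzero square-summable infinitesimal flex. -/
import Mathlib


open scoped BigOperators

/-- Positions of the three motif vertices of the strip framework. -/
def stripP : Fin 3 → Fin 2 → ℝ := ![![0, 0], ![0, 4], ![1, 3]]

/-- First endpoints (motif vertex labels, with translation index `0`) of the five motif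
edges of the strip framework. -/
def stripκ : Fin 5 → Fin 3 := ![0, 1, 0, 0, 2]

/-- Second endpoints (motif vertex labels) of the five motif edges. -/
def stripτ : Fin 5 → Fin 3 := ![1, 2, 2, 0, 1]

/-- Second endpoint translation indices of the five motif edges. -/
def stripl : Fin 5 → ℤ := ![0, 0, 0, 1, 1]

/-- The framework vertices `q(κ, k) = p(κ) + (4k, 0)` of the strip framework. -/
def stripQ (κ₀ : Fin 3) (k : ℤ) : Fin 2 → ℝ :=
  fun i => stripP κ₀ i + if i = 0 then 4 * (k : ℝ) else 0

/-- The edge vectors of the five motif edges of the strip framework. -/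
def stripV (e : Fin 5) : Fin 2 → ℝ :=
  fun i => stripQ (stripκ e) 0 i - stripQ (stripτ e) (stripl e) i

/-- An infinitesimal flex of the strip framework: for every translate of every motif edge
the Euclidean inner product of the edge vector with the difference of the endpoint
velocities vanishes. -/
def IsStripFlex (u : Fin 3 × ℤ → EuclideanSpace ℝ (Fin 2)) : Prop :=
  ∀ (e : Fin 5) (m : ℤ),
    ∑ i, stripV e i * (u (stripκ e, 0 + m) i - u (stripτ e, stripl e + m) i) = 0

/-- the strip framework rooted at its supporting line has no nonzero
square-summable infinitesimal flex. -/
theorem strip_no_l2_flex_fixing_base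
    (u : Fin 3 × ℤ → EuclideanSpace ℝ (Fin 2))
    (hflex : IsStripFlex u)
    (hbase : ∀ k : ℤ, u (0, k) = 0)
    (hl2 : Summable fun k : ℤ => ‖u (1, k)‖ ^ 2 + ‖u (2, k)‖ ^ 2) :
    u = 0 := by
  -- basic equations from the flex condition
  have h0 : ∀ m : ℤ, u (1, m) 1 = 0 := by
    intro m
    have h := hflex 0 m
    simp [stripV, stripκ, stripτ, stripl, stripQ, stripP, Fin.sum_univ_two, hbase] at h
    exact h
  have h2 : ∀ m : ℤ, 3 * u (2, m) 1 + u (2, m) 0 = 0 := by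
    intro m
    have h := hflex 2 m
    simpa [stripV, stripκ, stripτ, stripl, stripQ, stripP, Fin.sum_univ_two, hbase] using h
  have h1 : ∀ m : ℤ, u (1, m) 0 = -4 * u (2, m) 1 := by
    intro m
    have h := hflex 1 m
    simp [stripV, stripκ, stripτ, stripl, stripQ, stripP, Fin.sum_univ_two, hbase] at h
    have := h2 m
    have := h0 m
    linarith
  have hrec : ∀ m : ℤ, u (2, m) 1 = (3 / 2) * u (2, m + 1) 1 := by
    intro m
    have h := hflex 4 m
    simp [stripV, stripκ, stripτ, stripl, stripQ, stripP, Fin.sum_univ_two, hbase] at h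
    have e1 := h2 m
    have e2 := h0 (1 + m)
    have e3 := h1 (1 + m)
    have : (1 : ℤ) + m = m + 1 := by ring
    rw [this] at e2 e3
    rw [show (1 : ℤ) + m = m + 1 from by ring] at h
    linarith
  -- backward growth
  have hgrow : ∀ (n : ℕ) (m : ℤ), u (2, m - n) 1 = (3 / 2) ^ n * u (2, m) 1 := by
    intro n
    induction n with
    | zero => intro m; simp
    | succ n ih =>
      intro m
      have key : u (2, m - (n + 1 : ℕ)) 1 = (3 / 2) * u (2, m - (n + 1 : ℕ) + 1) 1 :=
        hrec _
      have : (m - (n + 1 : ℕ) + 1 : ℤ) = (m - n : ℤ) := by push_cast; ring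
      rw [this] at key
      rw [key, ih m]
      ring
  -- norm lower bound
  have hnorm : ∀ m : ℤ, (u (2, m) 1) ^ 2 ≤ ‖u (1, m)‖ ^ 2 + ‖u (2, m)‖ ^ 2 := by
    intro m
    have h : ‖u (2, m)‖ ^ 2 = (u (2, m) 0) ^ 2 + (u (2, m) 1) ^ 2 := by
      rw [EuclideanSpace.norm_eq, Real.sq_sqrt (by positivity)]
      simp [Fin.sum_univ_two, sq_abs]
    nlinarith [sq_nonneg ‖u (1, m)‖, sq_nonneg (u (2, m) 0)]
  -- a ≡ 0
  have ha : ∀ m : ℤ, u (2, m) 1 = 0 := by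
    intro m
    by_contra hne
    have hε : (0 : ℝ) < (u (2, m) 1) ^ 2 := by positivity
    have htend : Filter.Tendsto (fun k : ℤ => ‖u (1, k)‖ ^ 2 + ‖u (2, k)‖ ^ 2)
        Filter.atBot (nhds 0) := by
      have := hl2.tendsto_cofinite_zero
      rw [Int.cofinite_eq] at this
      exact this.mono_left le_sup_left
    have hev := htend.eventually (gt_mem_nhds hε)
    rw [Filter.eventually_atBot] at hev
    obtain ⟨K, hK⟩ := hev
    set n : ℕ := (m - K).toNat with hn
    have hk : m - (n : ℤ) ≤ K := by
      have := Int.self_le_toNat (m - K)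
      omega
    have hlt := hK _ hk
    have hgeq : (u (2, m) 1) ^ 2 ≤ (u (2, m - n) 1) ^ 2 := by
      rw [hgrow n m]
      have h1 : (1 : ℝ) ≤ (3 / 2) ^ n := one_le_pow₀ (by norm_num)
      have h1' : (1 : ℝ) ≤ ((3 / 2) ^ n) ^ 2 := by nlinarith
      calc (u (2, m) 1) ^ 2 ≤ ((3 / 2) ^ n) ^ 2 * (u (2, m) 1) ^ 2 := by
            nlinarith [sq_nonneg (u (2, m) 1)]
        _ = ((3 / 2) ^ n * u (2, m) 1) ^ 2 := by ring
    have := hnorm (m - n)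
    linarith
  -- conclude
  funext p
  obtain ⟨κ, k⟩ := p
  fin_cases κ
  · exact hbase k
  · have e0 : u (1, k) 0 = 0 := by rw [h1 k, ha k]; ring
    have e1 : u (1, k) 1 = 0 := h0 k
    ext i
    fin_cases i <;> simpa using (by assumption : _ = (0:ℝ))
  · have e1 : u (2, k) 1 = 0 := ha k
    have e0 : u (2, k) 0 = 0 := by have := h2 k; linarith
    ext i
    fin_cases i <;> simpa using (by assumption : _ = (0:ℝ))
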